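/- arXiv:2407.20620 — 2 statements merged into one kernel-verified Lean document; each statement's English description precedes it below -/
import Mathlib

section
/- Let f(x) = (1/2)⟨x, Qx⟩ + ⟨q, x⟩ with Q symmetric positive semidefinite with smallest eigenvalue m ≥ 0 and largest eigenvalue L > 0, let g : ℝⁿ → ℝ be convex and lower semicontinuous, and let μ ∈ (0, 1/L). Set L̃ = 2(1 − μm)/μ. Then the forward–backward envelope F_μ is convex and differentiable, and its gradient ∇F_μ is Lipschitz continuous with constant L̃. -/
/-!
The forward step `T x = x - μ (Q x + q)` is affine with linear part `S = I - μQ`, and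
`0 ≤ S ≤ (1 - μm) I` since `m I ≤ Q` and `μQ ≤ μL I ≤ I`. Write `F_μ = h + M ∘ T` with
`h = f - (μ/2)‖∇f‖²`. The first-order remainder of `F_μ` at `x` in direction `d` is
`½⟪d, Q S d⟫ ≥ 0` plus the first-order remainder of the Moreau envelope `M` between `T x` and
`T (x + d)`, and the latter lies in `[0, ‖S d‖² / (2μ)]` because the proximal point `p v`
satisfies `(v - p v)/μ ∈ ∂g(p v)`. So `F_μ` is convex and differentiable with
`∇F_μ x = μ⁻¹ S (x - p (T x))`, and since `p` is nonexpansive and `‖S‖ ≤ 1 - μm ≤ 1`, this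
gradient is `2(1 - μm)/μ`-Lipschitz. Proximal points exist because `g`, being convex and lower
semicontinuous, has an affine minorant, so the proximal objective is coercive.
-/

open Set RealInnerProductSpace Filter Topology

noncomputable section

theorem le_of_forall_mem_Ioc_le_add_mul {a b c : ℝ} (h : ∀ t ∈ Ioc (0 : ℝ) 1, a ≤ b + t * c) :
    a ≤ b := by
  have hlim : Tendsto (fun t : ℝ => b + t * c) (𝓝[>] 0) (𝓝 b) := by
    have hc : Continuous fun t : ℝ => b + t * c := by fun_prop
    simpa using (hc.tendsto 0).mono_left nhdsWithin_le_nhds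
  exact ge_of_tendsto hlim (mem_of_superset (Ioc_mem_nhdsGT one_pos) h)

theorem LowerSemicontinuous.exists_forall_le' {α β : Type*} [TopologicalSpace α] [LinearOrder β]
    {f : α → β} (hf : LowerSemicontinuous f) (x₀ : α) (h : ∀ᶠ x in cocompact α, f x₀ ≤ f x) :
    ∃ x, ∀ y, f x ≤ f y := by
  obtain ⟨K, hK, hKf⟩ := hasBasis_cocompact.eventually_iff.mp h
  obtain ⟨x, -, hx⟩ := (hf.lowerSemicontinuousOn _).exists_isMinOn (insert_nonempty x₀ K)
    (hK.insert x₀)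
  refine ⟨x, fun y => ?_⟩
  by_cases hy : y ∈ K
  exacts [hx (mem_insert_of_mem x₀ hy), (hx (mem_insert x₀ K)).trans (hKf hy)]

variable {E : Type*} [NormedAddCommGroup E]

def moreauEnvelope (μ : ℝ) (g : E → ℝ) (v : E) : ℝ :=
  ⨅ z, g z + ‖z - v‖ ^ 2 / (2 * μ)

def IsProxPoint (μ : ℝ) (g : E → ℝ) (v p : E) : Prop :=
  ∀ z, g p + ‖p - v‖ ^ 2 / (2 * μ) ≤ g z + ‖z - v‖ ^ 2 / (2 * μ)

variable {μ : ℝ} {g : E → ℝ}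

namespace IsProxPoint

variable {v p : E}

theorem moreauEnvelope_le (h : IsProxPoint μ g v p) (z : E) :
    moreauEnvelope μ g v ≤ g z + ‖z - v‖ ^ 2 / (2 * μ) :=
  ciInf_le ⟨_, forall_mem_range.2 h⟩ z

theorem moreauEnvelope_eq (h : IsProxPoint μ g v p) :
    moreauEnvelope μ g v = g p + ‖p - v‖ ^ 2 / (2 * μ) :=
  le_antisymm (h.moreauEnvelope_le p) (le_ciInf h)

end IsProxPoint

variable [InnerProductSpace ℝ E]

def fbEnvelope [CompleteSpace E] (μ : ℝ) (f g : E → ℝ) (x : E) : ℝ :=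
  f x + moreauEnvelope μ g (x - μ • gradient f x) - μ / 2 * ‖gradient f x‖ ^ 2

namespace LinearMap.IsPositive

variable {A : E →ₗ[ℝ] E}

theorem inner_map_sq_le (hA : A.IsPositive) (x y : E) :
    ⟪x, A y⟫ ^ 2 ≤ ⟪x, A x⟫ * ⟪y, A y⟫ := by
  have hquad : ∀ t : ℝ, 0 ≤ ⟪y, A y⟫ * (t * t) + 2 * ⟪x, A y⟫ * t + ⟪x, A x⟫ := by
    intro t
    have h := hA.inner_nonneg_right (x + t • y)
    have hyx : ⟪y, A x⟫ = ⟪x, A y⟫ := by rw [← hA.isSymmetric, real_inner_comm]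
    simp only [map_add, map_smul, inner_add_left, inner_add_right, real_inner_smul_left,
      real_inner_smul_right, hyx] at h
    linarith
  have := discrim_le_zero hquad
  rw [discrim] at this
  linarith

theorem norm_map_sq_le (hA : A.IsPositive) {c : ℝ} (hc0 : 0 ≤ c)
    (hc : ∀ x, ⟪x, A x⟫ ≤ c * ‖x‖ ^ 2) (x : E) : ‖A x‖ ^ 2 ≤ c * ⟪x, A x⟫ := by
  have hcs := hA.inner_map_sq_le (A x) x
  rw [real_inner_self_eq_norm_sq] at hcs
  have h1 := hc (A x)
  have h2 := hA.inner_nonneg_right x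
  rcases (norm_nonneg (A x)).eq_or_lt with h0 | h0
  · rw [← h0, sq, zero_mul]
    exact mul_nonneg hc0 h2
  · nlinarith [pow_pos h0 2]

theorem norm_map_le (hA : A.IsPositive) {c : ℝ} (hc0 : 0 ≤ c)
    (hc : ∀ x, ⟪x, A x⟫ ≤ c * ‖x‖ ^ 2) (x : E) : ‖A x‖ ≤ c * ‖x‖ := by
  refine pow_le_pow_iff_left₀ (norm_nonneg _) (by positivity) two_ne_zero |>.mp ?_
  calc ‖A x‖ ^ 2 ≤ c * ⟪x, A x⟫ := hA.norm_map_sq_le hc0 hc x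
    _ ≤ c * (c * ‖x‖ ^ 2) := mul_le_mul_of_nonneg_left (hc x) hc0
    _ = (c * ‖x‖) ^ 2 := by ring

end LinearMap.IsPositive

theorem norm_sub_smul_apply_le {Q : E →L[ℝ] E} {m : ℝ} (hQ : Q.IsSymmetric)
    (hm : ∀ x, m * ‖x‖ ^ 2 ≤ ⟪x, Q x⟫) (hQμ : ∀ x, μ * ⟪x, Q x⟫ ≤ ‖x‖ ^ 2) (hμ : 0 ≤ μ)
    (hμm : μ * m ≤ 1) (x : E) : ‖x - μ • Q x‖ ≤ (1 - μ * m) * ‖x‖ := by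
  set S : E →ₗ[ℝ] E := LinearMap.id - μ • (Q : E →ₗ[ℝ] E)
  have hS : ∀ x, S x = x - μ • Q x := fun x => rfl
  have hform : ∀ x, ⟪x, S x⟫ = ‖x‖ ^ 2 - μ * ⟪x, Q x⟫ := fun x => by
    rw [hS, inner_sub_right, real_inner_smul_right, real_inner_self_eq_norm_sq]
  have hSpos : S.IsPositive := by
    refine (LinearMap.isPositive_iff S).mpr
      ⟨LinearMap.IsSymmetric.id.sub (hQ.smul rfl), fun x => ?_⟩
    rw [real_inner_comm, hform]
    linarith [hQμ x]
  have hbound : ∀ x, ⟪x, S x⟫ ≤ (1 - μ * m) * ‖x‖ ^ 2 := fun x => by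
    rw [hform]
    nlinarith [mul_le_mul_of_nonneg_left (hm x) hμ]
  exact hSpos.norm_map_le (sub_nonneg.mpr hμm) hbound x

theorem hasGradientAt_of_abs_sub_sub_inner_le [CompleteSpace E] {φ : E → ℝ} {a x : E} {C : ℝ}
    (h : ∀ y, |φ y - φ x - ⟪a, y - x⟫| ≤ C * ‖y - x‖ ^ 2) : HasGradientAt φ a x := by
  rw [hasGradientAt_iff_isLittleO]
  refine (Asymptotics.IsBigO.of_bound C ?_).trans_isLittleO
    (Asymptotics.isLittleO_pow_sub_sub x one_lt_two)
  filter_upwards with y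
  simpa [abs_of_nonneg (sq_nonneg ‖y - x‖)] using h y

theorem convexOn_univ_of_add_inner_le {φ : E → ℝ} (a : E → E)
    (h : ∀ x y, φ x + ⟪a x, y - x⟫ ≤ φ y) : ConvexOn ℝ univ φ := by
  refine ⟨convex_univ, fun x _ y _ s t hs ht hst => ?_⟩
  set z := s • x + t • y
  have hz : s • (x - z) + t • (y - z) = 0 := by
    rw [smul_sub, smul_sub, sub_add_sub_comm, ← add_smul, hst, one_smul, sub_self]
  have hinner : s * ⟪a z, x - z⟫ + t * ⟪a z, y - z⟫ = 0 := by
    rw [← real_inner_smul_right, ← real_inner_smul_right, ← inner_add_right, hz,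
      inner_zero_right]
  have hx := mul_le_mul_of_nonneg_left (h z x) hs
  have hy := mul_le_mul_of_nonneg_left (h z y) ht
  simp only [smul_eq_mul]
  have : φ z = (s + t) * φ z := by rw [hst, one_mul]
  nlinarith

theorem ConvexOn.exists_sub_mul_norm_sub_le (hg : ConvexOn ℝ univ g)
    (hgl : LowerSemicontinuous g) (v : E) : ∃ a, 0 ≤ a ∧ ∀ z, g v - 1 - a * ‖z - v‖ ≤ g z := by
  obtain ⟨l, c, hlc, hv⟩ := hg.exists_affine_le_of_lt (𝕜 := ℝ) (mem_univ v)
    (sub_one_lt (g v)) isClosed_univ (hgl.lowerSemicontinuousOn _)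
  refine ⟨‖l‖, norm_nonneg l, fun z => ?_⟩
  have hz : l z + c ≤ g z := by simpa using hlc ⟨z, mem_univ z⟩
  have hlz : l v - l z ≤ ‖l‖ * ‖z - v‖ := by
    rw [← map_sub, norm_sub_rev z]
    exact (le_abs_self _).trans (l.le_opNorm _)
  simp only [RCLike.re_to_real] at hv
  linarith

theorem exists_isProxPoint [ProperSpace E] (hg : ConvexOn ℝ univ g) (hgl : LowerSemicontinuous g)
    (hμ : 0 < μ) (v : E) : ∃ p, IsProxPoint μ g v p := by
  obtain ⟨a, ha0, ha⟩ := hg.exists_sub_mul_norm_sub_le hgl v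
  have hlsc : LowerSemicontinuous fun z => g z + ‖z - v‖ ^ 2 / (2 * μ) :=
    hgl.add (by fun_prop : Continuous fun z => ‖z - v‖ ^ 2 / (2 * μ)).lowerSemicontinuous
  refine hlsc.exists_forall_le' v ?_
  have hdist : Tendsto (fun z => ‖z - v‖) (cocompact E) atTop :=
    tendsto_norm_cocompact_atTop.comp (Homeomorph.subRight v).isClosedEmbedding.tendsto_cocompact
  filter_upwards [hdist.eventually_ge_atTop (2 * μ * (a + 1) + 1)] with z hz
  have hquad : a * ‖z - v‖ + 1 ≤ ‖z - v‖ ^ 2 / (2 * μ) := by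
    have hs : 1 ≤ ‖z - v‖ := le_trans (by nlinarith) hz
    rw [le_div_iff₀ (by positivity)]
    nlinarith [mul_le_mul_of_nonneg_left hz (norm_nonneg (z - v))]
  have := ha z
  rw [sub_self, norm_zero, sq, zero_mul, zero_div, add_zero]
  linarith

namespace IsProxPoint

variable {v w p p' : E}

theorem add_inner_div_le (hg : ConvexOn ℝ univ g) (hμ : 0 < μ) (h : IsProxPoint μ g v p)
    (z : E) : g p + ⟪v - p, z - p⟫ / μ ≤ g z := by
  refine le_of_forall_mem_Ioc_le_add_mul (c := ‖z - p‖ ^ 2 / (2 * μ)) fun t ht => ?_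
  have hgw : g (p + t • (z - p)) ≤ (1 - t) * g p + t * g z := by
    have e : p + t • (z - p) = (1 - t) • p + t • z := by module
    simpa [e] using hg.2 (mem_univ p) (mem_univ z) (sub_nonneg.2 ht.2) ht.1.le (by ring)
  have hnorm : ‖p + t • (z - p) - v‖ ^ 2
      = ‖p - v‖ ^ 2 - 2 * t * ⟪v - p, z - p⟫ + t ^ 2 * ‖z - p‖ ^ 2 := by
    rw [show p + t • (z - p) - v = (p - v) + t • (z - p) by abel, norm_add_sq_real, norm_smul,
      real_inner_smul_right, Real.norm_eq_abs, mul_pow, sq_abs, ← neg_sub v p, inner_neg_left]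
    ring
  have hw := h (p + t • (z - p))
  rw [hnorm] at hw
  have key : t * (g p + ⟪v - p, z - p⟫ / μ) ≤ t * (g z + t * (‖z - p‖ ^ 2 / (2 * μ))) := by
    have e : (‖p - v‖ ^ 2 - 2 * t * ⟪v - p, z - p⟫ + t ^ 2 * ‖z - p‖ ^ 2) / (2 * μ)
        = ‖p - v‖ ^ 2 / (2 * μ) - t * (⟪v - p, z - p⟫ / μ) + t * (t * (‖z - p‖ ^ 2 / (2 * μ))) := by
      field_simp
    rw [e] at hw
    linarith
  exact le_of_mul_le_mul_left key ht.1

theorem norm_sub_sq_le_inner (hg : ConvexOn ℝ univ g) (hμ : 0 < μ) (hv : IsProxPoint μ g v p)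
    (hw : IsProxPoint μ g w p') : ‖p' - p‖ ^ 2 ≤ ⟪w - v, p' - p⟫ := by
  have h1 := hv.add_inner_div_le hg hμ p'
  have h2 := hw.add_inner_div_le hg hμ p
  have hsum : ⟪v - p, p' - p⟫ + ⟪w - p', p - p'⟫ ≤ 0 * μ := by
    rw [← div_le_iff₀ hμ, add_div]
    linarith
  have e : ⟪w - v, p' - p⟫ - ‖p' - p‖ ^ 2 = -(⟪v - p, p' - p⟫ + ⟪w - p', p - p'⟫) := by
    rw [← real_inner_self_eq_norm_sq, ← neg_sub p' p, inner_neg_right]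
    simp only [inner_sub_left]
    ring
  linarith

theorem norm_sub_le (hg : ConvexOn ℝ univ g) (hμ : 0 < μ) (hv : IsProxPoint μ g v p)
    (hw : IsProxPoint μ g w p') : ‖p' - p‖ ≤ ‖w - v‖ := by
  have h := (hv.norm_sub_sq_le_inner hg hμ hw).trans (real_inner_le_norm _ _)
  nlinarith [norm_nonneg (p' - p), norm_nonneg (w - v)]

end IsProxPoint

theorem moreauEnvelope_sub_sub_inner_nonneg {v w p p' : E} (hg : ConvexOn ℝ univ g) (hμ : 0 < μ)
    (hv : IsProxPoint μ g v p) (hw : IsProxPoint μ g w p') :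
    0 ≤ moreauEnvelope μ g w - moreauEnvelope μ g v - ⟪μ⁻¹ • (v - p), w - v⟫ := by
  have hsub := hv.add_inner_div_le hg hμ p'
  have hsplit : ⟪v - p, p' - p⟫ = ⟪v - p, w - v⟫ + ⟪v - p, p' - w⟫ + ‖v - p‖ ^ 2 := by
    rw [← real_inner_self_eq_norm_sq, ← inner_add_right, ← inner_add_right]
    congr 1
    abel
  have key : ⟪v - p, p' - p⟫ / μ + ‖p' - w‖ ^ 2 / (2 * μ) - ‖p - v‖ ^ 2 / (2 * μ)
      - μ⁻¹ * ⟪v - p, w - v⟫ = ‖(v - p) + (p' - w)‖ ^ 2 / (2 * μ) := by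
    rw [norm_add_sq_real, norm_sub_rev p v, hsplit]
    ring
  have hsq : 0 ≤ ‖(v - p) + (p' - w)‖ ^ 2 / (2 * μ) := by positivity
  rw [hw.moreauEnvelope_eq, hv.moreauEnvelope_eq, real_inner_smul_left]
  linarith

theorem moreauEnvelope_sub_sub_inner_le {v w p p' : E} (hv : IsProxPoint μ g v p)
    (hw : IsProxPoint μ g w p') :
    moreauEnvelope μ g w - moreauEnvelope μ g v - ⟪μ⁻¹ • (v - p), w - v⟫
      ≤ ‖w - v‖ ^ 2 / (2 * μ) := by
  have hle := hw.moreauEnvelope_le p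
  have key : ‖p - w‖ ^ 2 / (2 * μ) - ‖p - v‖ ^ 2 / (2 * μ) - μ⁻¹ * ⟪v - p, w - v⟫
      = ‖w - v‖ ^ 2 / (2 * μ) := by
    rw [show p - w = (p - v) - (w - v) by abel, norm_sub_sq_real, ← neg_sub v p, inner_neg_left]
    ring
  rw [hv.moreauEnvelope_eq, real_inner_smul_left]
  linarith

section Quadratic

variable {Q : E →L[ℝ] E} {q : E} {f : E → ℝ} {p : E → E}

theorem sub_sub_inner_eq_of_quadratic (hQ : Q.IsSymmetric)
    (hf : ∀ x, f x = 1 / 2 * ⟪x, Q x⟫ + ⟪q, x⟫) (x y : E) :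
    f y - f x - ⟪Q x + q, y - x⟫ = 1 / 2 * ⟪y - x, Q (y - x)⟫ := by
  have hsym : ⟪x, Q (y - x)⟫ = ⟪y - x, Q x⟫ :=
    (hQ x (y - x)).symm.trans (real_inner_comm _ _)
  rw [hf, hf, show y = x + (y - x) by abel, add_sub_cancel_left]
  simp only [map_add, inner_add_left, inner_add_right, hsym, real_inner_comm (y - x) (Q x)]
  ring

theorem hasGradientAt_of_quadratic [CompleteSpace E] (hQ : Q.IsSymmetric)
    (hf : ∀ x, f x = 1 / 2 * ⟪x, Q x⟫ + ⟪q, x⟫) (x : E) : HasGradientAt f (Q x + q) x := by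
  refine hasGradientAt_of_abs_sub_sub_inner_le (C := ‖Q‖ / 2) fun y => ?_
  rw [sub_sub_inner_eq_of_quadratic hQ hf, abs_mul, abs_of_pos one_half_pos]
  calc 1 / 2 * |⟪y - x, Q (y - x)⟫| ≤ 1 / 2 * (‖y - x‖ * (‖Q‖ * ‖y - x‖)) := by
        gcongr
        exact (abs_real_inner_le_norm _ _).trans (by gcongr; exact Q.le_opNorm _)
    _ = ‖Q‖ / 2 * ‖y - x‖ ^ 2 := by ring

/-- `μ⁻¹ (I - μQ) (x - p (x - μ ∇f x))` for `f x = ½⟪x, Q x⟫ + ⟪q, x⟫`, where `p` stands for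
`prox_{μg}`: the gradient of the forward–backward envelope. -/
def quadraticFBEGradient (μ : ℝ) (Q : E →L[ℝ] E) (q : E) (p : E → E) (x : E) : E :=
  μ⁻¹ • (x - p (x - μ • (Q x + q))) - Q (x - p (x - μ • (Q x + q)))

theorem norm_quadraticFBEGradient_sub_le {m : ℝ} (hQ : Q.IsSymmetric)
    (hm : ∀ x, m * ‖x‖ ^ 2 ≤ ⟪x, Q x⟫) (hQμ : ∀ x, μ * ⟪x, Q x⟫ ≤ ‖x‖ ^ 2) (hm0 : 0 ≤ m)
    (hμ : 0 < μ) (hμm : μ * m ≤ 1) (hg : ConvexOn ℝ univ g) (hp : ∀ v, IsProxPoint μ g v (p v))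
    (x y : E) :
    ‖quadraticFBEGradient μ Q q p x - quadraticFBEGradient μ Q q p y‖
      ≤ 2 * (1 - μ * m) / μ * ‖x - y‖ := by
  have hlin : ∀ a b : E, (μ⁻¹ • a - Q a) - (μ⁻¹ • b - Q b) = μ⁻¹ • ((a - b) - μ • Q (a - b)) :=
    fun a b => by
      rw [smul_sub μ⁻¹ (a - b), smul_smul, inv_mul_cancel₀ hμ.ne', one_smul, map_sub, smul_sub]
      abel
  set px := p (x - μ • (Q x + q))
  set py := p (y - μ • (Q y + q))
  have hprox : ‖px - py‖ ≤ ‖x - y‖ := by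
    refine ((hp _).norm_sub_le hg hμ (hp _)).trans ?_
    rw [show x - μ • (Q x + q) - (y - μ • (Q y + q)) = (x - y) - μ • Q (x - y) by
      rw [map_sub]; module]
    refine (norm_sub_smul_apply_le hQ hm hQμ hμ.le hμm (x - y)).trans ?_
    nlinarith [mul_nonneg hμ.le hm0, norm_nonneg (x - y)]
  have hdiff : ‖(x - px) - (y - py)‖ ≤ 2 * ‖x - y‖ := by
    rw [show (x - px) - (y - py) = (x - y) - (px - py) by abel]
    linarith [norm_sub_le (x - y) (px - py)]
  rw [quadraticFBEGradient, quadraticFBEGradient, hlin, norm_smul, Real.norm_eq_abs,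
    abs_of_pos (inv_pos.2 hμ)]
  calc μ⁻¹ * ‖(x - px - (y - py)) - μ • Q (x - px - (y - py))‖
      ≤ μ⁻¹ * ((1 - μ * m) * (2 * ‖x - y‖)) := by
        gcongr
        refine (norm_sub_smul_apply_le hQ hm hQμ hμ.le hμm _).trans ?_
        gcongr
    _ = 2 * (1 - μ * m) / μ * ‖x - y‖ := by ring

variable [CompleteSpace E]

theorem fbEnvelope_sub_sub_inner_eq (hQ : Q.IsSymmetric)
    (hf : ∀ x, f x = 1 / 2 * ⟪x, Q x⟫ + ⟪q, x⟫) (hμ : μ ≠ 0) (x y : E) :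
    fbEnvelope μ f g y - fbEnvelope μ f g x - ⟪quadraticFBEGradient μ Q q p x, y - x⟫
      = (1 / 2 * ⟪y - x, Q (y - x)⟫ - μ / 2 * ‖Q (y - x)‖ ^ 2)
        + (moreauEnvelope μ g (y - μ • (Q y + q)) - moreauEnvelope μ g (x - μ • (Q x + q))
          - ⟪μ⁻¹ • (x - μ • (Q x + q) - p (x - μ • (Q x + q))),
              y - μ • (Q y + q) - (x - μ • (Q x + q))⟫) := by
  have hgrad : ∀ z, gradient f z = Q z + q := fun z => (hasGradientAt_of_quadratic hQ hf z).gradient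
  have hfxy := sub_sub_inner_eq_of_quadratic hQ hf x y
  simp only [fbEnvelope, quadraticFBEGradient, hgrad]
  set c := Q x + q
  set d := y - x
  set z := x - p (x - μ • c)
  have hQy : Q y + q = c + Q d := by simp only [c, d, map_sub]; abel
  have hstep : y - μ • (c + Q d) - (x - μ • c) = d - μ • Q d := by simp only [d]; module
  have hprox : μ⁻¹ • (x - μ • c - p (x - μ • c)) = μ⁻¹ • z - c := by
    rw [show x - μ • c - p (x - μ • c) = z - μ • c by simp only [z]; abel, smul_sub, smul_smul,
      inv_mul_cancel₀ hμ, one_smul]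
  have hsym : ⟪Q z, d⟫ = ⟪z, Q d⟫ := hQ z d
  rw [hQy, hstep, hprox, norm_add_sq_real]
  simp only [inner_sub_left, inner_sub_right, real_inner_smul_left, real_inner_smul_right, hsym]
  field_simp
  linear_combination 2 * μ * hfxy

theorem fbEnvelope_sub_sub_inner_nonneg (hQ : Q.IsPositive) (hQμ : ∀ x, μ * ⟪x, Q x⟫ ≤ ‖x‖ ^ 2)
    (hμ : 0 < μ) (hf : ∀ x, f x = 1 / 2 * ⟪x, Q x⟫ + ⟪q, x⟫) (hg : ConvexOn ℝ univ g)
    (hp : ∀ v, IsProxPoint μ g v (p v)) (x y : E) :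
    0 ≤ fbEnvelope μ f g y - fbEnvelope μ f g x - ⟪quadraticFBEGradient μ Q q p x, y - x⟫ := by
  rw [fbEnvelope_sub_sub_inner_eq hQ.isSymmetric hf hμ.ne']
  have hQd : μ * ‖Q (y - x)‖ ^ 2 ≤ ⟪y - x, Q (y - x)⟫ :=
    (le_inv_mul_iff₀ hμ).1 <| hQ.toLinearMap.norm_map_sq_le (inv_nonneg.2 hμ.le)
      (fun z => (le_inv_mul_iff₀ hμ).2 (hQμ z)) (y - x)
  have hM := moreauEnvelope_sub_sub_inner_nonneg hg hμ (hp (x - μ • (Q x + q)))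
    (hp (y - μ • (Q y + q)))
  linarith

theorem fbEnvelope_sub_sub_inner_le (hQ : Q.IsPositive) (hQμ : ∀ x, μ * ⟪x, Q x⟫ ≤ ‖x‖ ^ 2)
    (hμ : 0 < μ) (hf : ∀ x, f x = 1 / 2 * ⟪x, Q x⟫ + ⟪q, x⟫) (hp : ∀ v, IsProxPoint μ g v (p v))
    (x y : E) :
    fbEnvelope μ f g y - fbEnvelope μ f g x - ⟪quadraticFBEGradient μ Q q p x, y - x⟫
      ≤ μ⁻¹ * ‖y - x‖ ^ 2 := by
  rw [fbEnvelope_sub_sub_inner_eq hQ.isSymmetric hf hμ.ne']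
  have hM := moreauEnvelope_sub_sub_inner_le (hp (x - μ • (Q x + q))) (hp (y - μ • (Q y + q)))
  have hstep : y - μ • (Q y + q) - (x - μ • (Q x + q)) = (y - x) - μ • Q (y - x) := by
    rw [map_sub]; module
  have hS : ‖(y - x) - μ • Q (y - x)‖ ≤ ‖y - x‖ := by
    simpa using norm_sub_smul_apply_le (m := 0) hQ.isSymmetric
      (fun z => by simpa using hQ.inner_nonneg_right z) hQμ hμ.le (by simp) (y - x)
  have hQd : μ * ⟪y - x, Q (y - x)⟫ ≤ ‖y - x‖ ^ 2 := hQμ (y - x)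
  rw [hstep] at hM ⊢
  have h2μ : 0 < 2 * μ := by positivity
  have hMd : ‖(y - x) - μ • Q (y - x)‖ ^ 2 / (2 * μ) ≤ ‖y - x‖ ^ 2 / (2 * μ) := by gcongr
  have hQd' : 1 / 2 * ⟪y - x, Q (y - x)⟫ ≤ ‖y - x‖ ^ 2 / (2 * μ) := by
    rw [le_div_iff₀ h2μ]; linarith
  have hsplit : ‖y - x‖ ^ 2 / (2 * μ) + ‖y - x‖ ^ 2 / (2 * μ) = μ⁻¹ * ‖y - x‖ ^ 2 := by ring
  have hQQ : 0 ≤ μ / 2 * ‖Q (y - x)‖ ^ 2 := by positivity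
  linarith

theorem hasGradientAt_fbEnvelope (hQ : Q.IsPositive) (hQμ : ∀ x, μ * ⟪x, Q x⟫ ≤ ‖x‖ ^ 2)
    (hμ : 0 < μ) (hf : ∀ x, f x = 1 / 2 * ⟪x, Q x⟫ + ⟪q, x⟫) (hg : ConvexOn ℝ univ g)
    (hp : ∀ v, IsProxPoint μ g v (p v)) (x : E) :
    HasGradientAt (fbEnvelope μ f g) (quadraticFBEGradient μ Q q p x) x := by
  refine hasGradientAt_of_abs_sub_sub_inner_le (C := μ⁻¹) fun y => abs_le.2 ⟨?_, ?_⟩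
  · have := fbEnvelope_sub_sub_inner_nonneg hQ hQμ hμ hf hg hp x y
    have : 0 ≤ μ⁻¹ * ‖y - x‖ ^ 2 := by positivity
    linarith
  · exact fbEnvelope_sub_sub_inner_le hQ hQμ hμ hf hp x y

theorem convexOn_fbEnvelope (hQ : Q.IsPositive) (hQμ : ∀ x, μ * ⟪x, Q x⟫ ≤ ‖x‖ ^ 2)
    (hμ : 0 < μ) (hf : ∀ x, f x = 1 / 2 * ⟪x, Q x⟫ + ⟪q, x⟫) (hg : ConvexOn ℝ univ g)
    (hp : ∀ v, IsProxPoint μ g v (p v)) : ConvexOn ℝ univ (fbEnvelope μ f g) :=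
  convexOn_univ_of_add_inner_le (quadraticFBEGradient μ Q q p) fun x y => by
    linarith [fbEnvelope_sub_sub_inner_nonneg hQ hQμ hμ hf hg hp x y]

end Quadratic

theorem FB_envelope_smooth_quadratic_general {n : ℕ}
    (Q : EuclideanSpace ℝ (Fin n) →L[ℝ] EuclideanSpace ℝ (Fin n))
    (q : EuclideanSpace ℝ (Fin n)) (g : EuclideanSpace ℝ (Fin n) → ℝ)
    (m L μ Lt : ℝ)
    (hQsym : ∀ x y : EuclideanSpace ℝ (Fin n), ⟪Q x, y⟫ = ⟪x, Q y⟫)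
    (hm : 0 ≤ m) (hL : 0 < L)
    (hQm : ∀ x : EuclideanSpace ℝ (Fin n), m * ‖x‖ ^ 2 ≤ ⟪x, Q x⟫)
    (hQmmin : ∃ x : EuclideanSpace ℝ (Fin n), x ≠ 0 ∧ ⟪x, Q x⟫ = m * ‖x‖ ^ 2)
    (hQL : ∀ x : EuclideanSpace ℝ (Fin n), ⟪x, Q x⟫ ≤ L * ‖x‖ ^ 2)
    (f : EuclideanSpace ℝ (Fin n) → ℝ)
    (hf : ∀ x, f x = (1 / 2) * ⟪x, Q x⟫ + ⟪q, x⟫)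
    (hgconv : ConvexOn ℝ univ g) (hglsc : LowerSemicontinuous g)
    (hμ : μ ∈ Ioo 0 (1 / L))
    (hLt : Lt = 2 * (1 - μ * m) / μ)
    (M : EuclideanSpace ℝ (Fin n) → ℝ)
    (hM : ∀ v, M v = ⨅ z : EuclideanSpace ℝ (Fin n), (g z + ‖z - v‖ ^ 2 / (2 * μ)))
    (Fμ : EuclideanSpace ℝ (Fin n) → ℝ)
    (hFμ : ∀ x, Fμ x = f x + M (x - μ • gradient f x) - μ / 2 * ‖gradient f x‖ ^ 2) :
    ConvexOn ℝ univ Fμ ∧ Differentiable ℝ Fμ ∧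
      ∀ x y, ‖gradient Fμ x - gradient Fμ y‖ ≤ Lt * ‖x - y‖ := by
  obtain ⟨hμ0, hμL⟩ := hμ
  rw [lt_div_iff₀ hL] at hμL
  obtain ⟨x₀, hx₀, hx₀m⟩ := hQmmin
  have hmL : m ≤ L :=
    le_of_mul_le_mul_right (hx₀m ▸ hQL x₀) (pow_pos (norm_pos_iff.2 hx₀) 2)
  have hQ : Q.IsPositive := (Q.isPositive_iff).2 ⟨hQsym, fun x => by
    rw [real_inner_comm]; exact (by positivity : 0 ≤ m * ‖x‖ ^ 2).trans (hQm x)⟩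
  have hQμ : ∀ x, μ * ⟪x, Q x⟫ ≤ ‖x‖ ^ 2 := fun x => by
    nlinarith [mul_le_mul_of_nonneg_left (hQL x) hμ0.le, sq_nonneg ‖x‖]
  have hμm : μ * m ≤ 1 := by nlinarith
  choose p hp using exists_isProxPoint hgconv hglsc hμ0
  have hF : Fμ = fbEnvelope μ f g := funext fun x => by rw [hFμ, hM]; rfl
  have hgrad := hasGradientAt_fbEnvelope hQ hQμ hμ0 hf hgconv hp
  subst hF hLt
  refine ⟨convexOn_fbEnvelope hQ hQμ hμ0 hf hgconv hp, fun x => (hgrad x).differentiableAt,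
    fun x y => ?_⟩
  rw [(hgrad x).gradient, (hgrad y).gradient]
  exact norm_quadraticFBEGradient_sub_le hQsym hQm hQμ hm hμ0 hμm hgconv hp x y

/-- Lemma 2, forward–backward smoothness: for a convex
quadratic `f`, the forward–backward envelope is convex and differentiable with
`L̃ = 2(1 - μm)/μ`-Lipschitz gradient. -/
theorem FB_envelope_smooth_quadratic {n : ℕ}
    (Q : EuclideanSpace ℝ (Fin n) →L[ℝ] EuclideanSpace ℝ (Fin n))
    (q : EuclideanSpace ℝ (Fin n)) (g : EuclideanSpace ℝ (Fin n) → ℝ)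
    (m L μ Lt : ℝ)
    (hQsym : ∀ x y : EuclideanSpace ℝ (Fin n), ⟪Q x, y⟫ = ⟪x, Q y⟫)
    (hm : 0 ≤ m) (hL : 0 < L)
    (hQm : ∀ x : EuclideanSpace ℝ (Fin n), m * ‖x‖ ^ 2 ≤ ⟪x, Q x⟫)
    (hQmmin : ∃ x : EuclideanSpace ℝ (Fin n), x ≠ 0 ∧ ⟪x, Q x⟫ = m * ‖x‖ ^ 2)
    (hQL : ∀ x : EuclideanSpace ℝ (Fin n), ⟪x, Q x⟫ ≤ L * ‖x‖ ^ 2)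
    (hQLmax : ∃ x : EuclideanSpace ℝ (Fin n), x ≠ 0 ∧ ⟪x, Q x⟫ = L * ‖x‖ ^ 2)
    (f : EuclideanSpace ℝ (Fin n) → ℝ)
    (hf : ∀ x, f x = (1 / 2) * ⟪x, Q x⟫ + ⟪q, x⟫)
    (hgconv : ConvexOn ℝ univ g) (hglsc : LowerSemicontinuous g)
    (hμ : μ ∈ Ioo 0 (1 / L))
    (hLt : Lt = 2 * (1 - μ * m) / μ)
    (M : EuclideanSpace ℝ (Fin n) → ℝ)
    (hM : ∀ v, M v = ⨅ z : EuclideanSpace ℝ (Fin n), (g z + ‖z - v‖ ^ 2 / (2 * μ)))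
    (Fμ : EuclideanSpace ℝ (Fin n) → ℝ)
    (hFμ : ∀ x, Fμ x = f x + M (x - μ • gradient f x) - μ / 2 * ‖gradient f x‖ ^ 2) :
    ConvexOn ℝ univ Fμ ∧ Differentiable ℝ Fμ ∧
      ∀ x y, ‖gradient Fμ x - gradient Fμ y‖ ≤ Lt * ‖x - y‖ :=
  FB_envelope_smooth_quadratic_general Q q g m L μ Lt hQsym hm hL hQm hQmmin hQL f hf hgconv hglsc
    hμ hLt M hM Fμ hFμ
end
end

section
/- Let f : ℝⁿ → ℝ be continuously differentiable and convex with L-Lipschitz gradient, let g : ℝⁿ → ℝ be convex and lower semicontinuous, and let μ ∈ (0, 1/L). Then inf F = inf F_μ (as extended-real infima over ℝⁿ), and a point x⋆ ∈ ℝⁿ minimizes F = f + g if and only if it minimizes the forward–backward envelope F_μ. -/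
/-!
Completing the square in the Moreau envelope gives `F_μ x = ⨅ z, fbModel f g μ x z`, where
`fbModel f g μ x z = f x + ⟪∇f x, z - x⟫ + g z + ‖z - x‖² / (2μ)`. Taking `z = x` shows `F_μ ≤ F`,
and the descent lemma for the `L`-smooth `f` gives `F z + c‖z - x‖² ≤ fbModel f g μ x z` with
`c = 1/(2μ) - L/2 > 0`. Hence every lower bound of `F` bounds `F_μ`: the infima agree and
minimizers of `F` minimize `F_μ`. Conversely, if `x` minimizes `F_μ`, then `F_μ x ≤ F z` forces the
near-minimizers `z` of `fbModel f g μ x` to have `c‖z - x‖²` small, so they converge to `x`, and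
continuity of `F` yields `F x ≤ F_μ x`.
-/

open Set RealInnerProductSpace

section Descent

variable {E : Type*} [NormedAddCommGroup E] [InnerProductSpace ℝ E] [CompleteSpace E]
  {f : E → ℝ}

theorem Differentiable.hasDerivAt_comp_add_smul (hf : Differentiable ℝ f) (x v : E) (t : ℝ) :
    HasDerivAt (fun s : ℝ => f (x + s • v)) ⟪gradient f (x + t • v), v⟫ t := by
  have hline : HasDerivAt (fun s : ℝ => x + s • v) v t := by
    simpa using ((hasDerivAt_id t).smul_const v).const_add x
  simpa [Function.comp_def, HasGradientAt.fderiv_apply]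
    using (hf _).hasGradientAt.hasFDerivAt.comp_hasDerivAt t hline

theorem Differentiable.le_add_inner_gradient_add_of_lipschitz_gradient (hf : Differentiable ℝ f)
    {L : ℝ} (hLip : ∀ x y, ‖gradient f x - gradient f y‖ ≤ L * ‖x - y‖) (x z : E) :
    f z ≤ f x + ⟪gradient f x, z - x⟫ + L / 2 * ‖z - x‖ ^ 2 := by
  set v := z - x
  have hf' := hf.hasDerivAt_comp_add_smul x v
  have hB : ∀ t : ℝ,
      HasDerivAt (fun s : ℝ => f x + s * ⟪gradient f x, v⟫ + L / 2 * s ^ 2 * ‖v‖ ^ 2)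
        (⟪gradient f x, v⟫ + L * t * ‖v‖ ^ 2) t := by
    intro t
    have hpoly := (((hasDerivAt_id t).mul_const ⟪gradient f x, v⟫).const_add (f x)).add
      (((hasDerivAt_pow 2 t).const_mul (L / 2)).mul_const (‖v‖ ^ 2))
    exact hpoly.congr_deriv (by simp only [one_mul, Nat.cast_ofNat]; ring)
  have hslope : ∀ t ∈ Ico (0 : ℝ) 1,
      ⟪gradient f (x + t • v), v⟫ ≤ ⟪gradient f x, v⟫ + L * t * ‖v‖ ^ 2 := by
    rintro t ⟨ht0, -⟩
    have hgrad : ‖gradient f (x + t • v) - gradient f x‖ ≤ L * (t * ‖v‖) := by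
      simpa [norm_smul, abs_of_nonneg ht0] using hLip (x + t • v) x
    calc ⟪gradient f (x + t • v), v⟫
        = ⟪gradient f x, v⟫ + ⟪gradient f (x + t • v) - gradient f x, v⟫ := by
          rw [inner_sub_left]; ring
      _ ≤ ⟪gradient f x, v⟫ + ‖gradient f (x + t • v) - gradient f x‖ * ‖v‖ :=
          add_le_add_right (real_inner_le_norm _ _) _
      _ ≤ ⟪gradient f x, v⟫ + L * t * ‖v‖ ^ 2 := by
          nlinarith [mul_le_mul_of_nonneg_right hgrad (norm_nonneg v)]
  have key := image_le_of_deriv_right_le_deriv_boundary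
    (fun t _ => (hf' t).continuousAt.continuousWithinAt)
    (fun t _ => (hf' t).hasDerivWithinAt) (by simp)
    (fun t _ => (hB t).continuousAt.continuousWithinAt)
    (fun t _ => (hB t).hasDerivWithinAt) hslope (right_mem_Icc.2 zero_le_one)
  simpa [v] using key

end Descent

theorem ConvexOn.exists_sub_mul_norm_le {E : Type*} [NormedAddCommGroup E] [NormedSpace ℝ E]
    [FiniteDimensional ℝ E] {g : E → ℝ} (hg : ConvexOn ℝ univ g) :
    ∃ B C : ℝ, 0 ≤ C ∧ ∀ z, B - C * ‖z‖ ≤ g z := by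
  have hgc : ContinuousOn g (Metric.closedBall 0 1) :=
    (hg.continuousOn isOpen_univ).mono (subset_univ _)
  obtain ⟨w, -, hw⟩ := (isCompact_closedBall (0 : E) 1).exists_isMinOn
    ⟨0, Metric.mem_closedBall_self zero_le_one⟩ hgc
  have hball : ∀ {z : E}, ‖z‖ ≤ 1 → g w ≤ g z := fun hz => hw (by simpa using hz)
  have hw0 : g w ≤ g 0 := hball (by simp)
  refine ⟨g w, g 0 - g w, sub_nonneg.2 hw0, fun z => ?_⟩
  rcases le_or_gt ‖z‖ 1 with hz | hz
  · nlinarith [hball hz, norm_nonneg z]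
  · -- `‖z‖⁻¹ • z` is a convex combination of `z` and `0` lying on the unit sphere
    set R := ‖z‖
    have hR : 0 < R := one_pos.trans hz
    have hconv := hg.2 (mem_univ z) (mem_univ 0) (inv_nonneg.2 hR.le)
      (sub_nonneg.2 (inv_le_one_of_one_le₀ hz.le)) (add_sub_cancel _ _)
    rw [smul_zero, add_zero, smul_eq_mul, smul_eq_mul] at hconv
    have hunit : g w ≤ g (R⁻¹ • z) := hball (by simp [R, norm_smul, hR.ne'])
    have hscaled : R * g w ≤ g z + (R - 1) * g 0 := by
      calc R * g w ≤ R * (R⁻¹ * g z + (1 - R⁻¹) * g 0) :=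
            mul_le_mul_of_nonneg_left (hunit.trans hconv) hR.le
        _ = g z + (R - 1) * g 0 := by field_simp
    nlinarith

theorem ConvexOn.bddBelow_range_add_sq_norm_sub_div {E : Type*} [NormedAddCommGroup E]
    [NormedSpace ℝ E] [FiniteDimensional ℝ E] {g : E → ℝ} (hg : ConvexOn ℝ univ g) {μ : ℝ}
    (hμ : 0 < μ) (v : E) : BddBelow (range fun z => g z + ‖z - v‖ ^ 2 / (2 * μ)) := by
  obtain ⟨B, C, hC, hBC⟩ := hg.exists_sub_mul_norm_le
  refine ⟨B - C * ‖v‖ - μ * C ^ 2 / 2, forall_mem_range.2 fun z => ?_⟩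
  have htri : ‖z‖ ≤ ‖z - v‖ + ‖v‖ := norm_le_norm_sub_add z v
  have hquad : C * ‖z - v‖ - μ * C ^ 2 / 2 ≤ ‖z - v‖ ^ 2 / (2 * μ) := by
    rw [le_div_iff₀ (by positivity)]
    nlinarith [sq_nonneg (‖z - v‖ - μ * C)]
  nlinarith [hBC z, mul_le_mul_of_nonneg_left htri hC]

section Envelope

variable {X : Type*} [PseudoMetricSpace X] {F : X → ℝ} {h : X → X → ℝ} {c : ℝ}

theorem le_ciInf_of_forall_le_of_add_mul_sq_dist_le (hc : 0 ≤ c)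
    (hmaj : ∀ x z, F z + c * dist z x ^ 2 ≤ h x z) {r : ℝ} (hr : ∀ z, r ≤ F z) (x : X) :
    r ≤ ⨅ z, h x z :=
  haveI : Nonempty X := ⟨x⟩
  le_ciInf fun z => (hr z).trans <| (le_add_of_nonneg_right (by positivity)).trans (hmaj x z)

theorem iInf_coe_eq_iInf_coe_ciInf (hc : 0 ≤ c) (hmaj : ∀ x z, F z + c * dist z x ^ 2 ≤ h x z)
    (hdiag : ∀ x, h x x = F x) (hbdd : ∀ x, BddBelow (range (h x))) :
    (⨅ x, (F x : EReal)) = ⨅ x, ((⨅ z, h x z : ℝ) : EReal) := by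
  refine le_antisymm (le_iInf fun x => ?_) (iInf_mono fun x => ?_)
  · have : Nonempty X := ⟨x⟩
    rw [Monotone.map_ciInf_of_continuousAt continuous_coe_real_ereal.continuousAt
      (fun _ _ => EReal.coe_le_coe) (hbdd x)]
    exact le_iInf fun z => iInf_le_of_le z <| EReal.coe_le_coe <|
      (le_add_of_nonneg_right (by positivity)).trans (hmaj x z)
  · exact EReal.coe_le_coe <| (ciInf_le (hbdd x) x).trans_eq (hdiag x)

theorem le_ciInf_of_lowerSemicontinuousAt (hc : 0 < c)
    (hmaj : ∀ x z, F z + c * dist z x ^ 2 ≤ h x z) {x : X}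
    (hF : LowerSemicontinuousAt F x) (hlow : ∀ z, (⨅ w, h x w) ≤ F z) :
    F x ≤ ⨅ z, h x z := by
  have : Nonempty X := ⟨x⟩
  refine le_of_forall_pos_lt_add fun ε hε => ?_
  obtain ⟨r, hr, hnear⟩ := Metric.eventually_nhds_iff.1 (hF (F x - ε / 2) (by linarith))
  obtain ⟨z, hz⟩ : ∃ z, h x z < (⨅ w, h x w) + min (ε / 2) (c * r ^ 2) :=
    exists_lt_of_ciInf_lt (lt_add_of_pos_right _ (by positivity))
  have hmajz := hmaj x z
  have hFz := hlow z
  have hdist : dist z x < r := by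
    have : c * dist z x ^ 2 < c * r ^ 2 := by linarith [min_le_right (ε / 2) (c * r ^ 2)]
    exact (pow_lt_pow_iff_left₀ dist_nonneg hr.le two_ne_zero).1 (lt_of_mul_lt_mul_left this hc.le)
  linarith [hnear hdist, min_le_left (ε / 2) (c * r ^ 2), mul_nonneg hc.le (sq_nonneg (dist z x))]

theorem isMinOn_univ_iff_ciInf (hc : 0 < c) (hmaj : ∀ x z, F z + c * dist z x ^ 2 ≤ h x z)
    (hdiag : ∀ x, h x x = F x) (hbdd : ∀ x, BddBelow (range (h x)))
    (hF : LowerSemicontinuous F) (x : X) :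
    IsMinOn F univ x ↔ IsMinOn (fun y => ⨅ z, h y z) univ x := by
  have hle : ∀ y, ⨅ z, h y z ≤ F y := fun y => (ciInf_le (hbdd y) y).trans_eq (hdiag y)
  simp only [isMinOn_univ_iff]
  constructor
  · exact fun hmin y =>
      (hle x).trans (le_ciInf_of_forall_le_of_add_mul_sq_dist_le hc.le hmaj hmin y)
  · intro hmin y
    calc F x ≤ ⨅ z, h x z :=
          le_ciInf_of_lowerSemicontinuousAt hc hmaj (hF x) fun z => (hmin z).trans (hle z)
      _ ≤ ⨅ z, h y z := hmin y
      _ ≤ F y := hle y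

end Envelope

section ForwardBackward

variable {E : Type*} [NormedAddCommGroup E] [InnerProductSpace ℝ E] [CompleteSpace E]
  (f g : E → ℝ) (μ : ℝ)

noncomputable def fbModel (x z : E) : ℝ :=
  f x + ⟪gradient f x, z - x⟫ + g z + ‖z - x‖ ^ 2 / (2 * μ)

variable {f g μ}

theorem fbModel_self (x : E) : fbModel f g μ x x = f x + g x := by
  simp [fbModel]

theorem proxObjective_eq_fbModel (hμ : μ ≠ 0) (x z : E) :
    g z + ‖z - (x - μ • gradient f x)‖ ^ 2 / (2 * μ)
      = fbModel f g μ x z + (μ / 2 * ‖gradient f x‖ ^ 2 - f x) := by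
  rw [show z - (x - μ • gradient f x) = (z - x) + μ • gradient f x by abel, norm_add_sq_real,
    real_inner_smul_right, real_inner_comm, norm_smul, Real.norm_eq_abs, mul_pow, sq_abs, fbModel]
  field_simp
  ring

theorem bddBelow_range_fbModel [FiniteDimensional ℝ E] (hg : ConvexOn ℝ univ g) (hμ : 0 < μ)
    (x : E) : BddBelow (range (fbModel f g μ x)) := by
  obtain ⟨b, hb⟩ := hg.bddBelow_range_add_sq_norm_sub_div hμ (x - μ • gradient f x)
  refine ⟨b - (μ / 2 * ‖gradient f x‖ ^ 2 - f x), forall_mem_range.2 fun z => ?_⟩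
  have := hb (mem_range_self z)
  rw [proxObjective_eq_fbModel hμ.ne'] at this
  linarith

theorem forwardBackwardEnvelope_eq_ciInf_fbModel [FiniteDimensional ℝ E]
    (hg : ConvexOn ℝ univ g) (hμ : 0 < μ) (x : E) :
    f x + (⨅ z, g z + ‖z - (x - μ • gradient f x)‖ ^ 2 / (2 * μ)) - μ / 2 * ‖gradient f x‖ ^ 2
      = ⨅ z, fbModel f g μ x z := by
  simp_rw [proxObjective_eq_fbModel hμ.ne', ← ciInf_add (bddBelow_range_fbModel hg hμ x)]
  ring

theorem add_mul_sq_le_fbModel (hf : Differentiable ℝ f) {L : ℝ}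
    (hLip : ∀ x y, ‖gradient f x - gradient f y‖ ≤ L * ‖x - y‖) (x z : E) :
    f z + g z + (1 / (2 * μ) - L / 2) * ‖z - x‖ ^ 2 ≤ fbModel f g μ x z := by
  have hdescent := hf.le_add_inner_gradient_add_of_lipschitz_gradient hLip x z
  have hsplit : (1 / (2 * μ) - L / 2) * ‖z - x‖ ^ 2
      = ‖z - x‖ ^ 2 / (2 * μ) - L / 2 * ‖z - x‖ ^ 2 := by
    ring
  rw [fbModel]
  linarith

end ForwardBackward

theorem FB_envelope_min_equivalence_general {n : ℕ}
    (f g F : EuclideanSpace ℝ (Fin n) → ℝ)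
    (L μ : ℝ)
    (hfC1 : ContDiff ℝ 1 f)
    (hfLip : ∀ x y, ‖gradient f x - gradient f y‖ ≤ L * ‖x - y‖)
    (hgconv : ConvexOn ℝ univ g)
    (hF : ∀ x, F x = f x + g x)
    (hμ : μ ∈ Ioo 0 (1 / L))
    (M : EuclideanSpace ℝ (Fin n) → ℝ)
    (hM : ∀ v, M v = ⨅ z : EuclideanSpace ℝ (Fin n), (g z + ‖z - v‖ ^ 2 / (2 * μ)))
    (Fμ : EuclideanSpace ℝ (Fin n) → ℝ)
    (hFμ : ∀ x, Fμ x = f x + M (x - μ • gradient f x) - μ / 2 * ‖gradient f x‖ ^ 2) :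
    (⨅ x : EuclideanSpace ℝ (Fin n), (F x : EReal)) =
      (⨅ x : EuclideanSpace ℝ (Fin n), (Fμ x : EReal)) ∧
    ∀ xs : EuclideanSpace ℝ (Fin n), IsMinOn F univ xs ↔ IsMinOn Fμ univ xs := by
  obtain ⟨hμ0, hμL⟩ := hμ
  have hc : 0 < 1 / (2 * μ) - L / 2 := by
    have hμL' : μ * L < 1 := (lt_div_iff₀ (one_div_pos.1 (hμ0.trans hμL))).1 hμL
    rw [sub_pos, div_lt_div_iff₀ two_pos (by positivity)]
    linarith
  have hmaj : ∀ x z, F z + (1 / (2 * μ) - L / 2) * dist z x ^ 2 ≤ fbModel f g μ x z :=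
    fun x z => by
      rw [hF, dist_eq_norm]
      exact add_mul_sq_le_fbModel (hfC1.differentiable one_ne_zero) hfLip x z
  have hdiag : ∀ x, fbModel f g μ x x = F x := fun x => (fbModel_self x).trans (hF x).symm
  have hbdd : ∀ x, BddBelow (range (fbModel f g μ x)) := bddBelow_range_fbModel hgconv hμ0
  have hFcont : Continuous F := by
    rw [funext hF]
    exact hfC1.continuous.add (continuousOn_univ.1 (hgconv.continuousOn isOpen_univ))
  have hFμ_eq : Fμ = fun x => ⨅ z, fbModel f g μ x z := by
    funext x
    rw [hFμ, hM, forwardBackwardEnvelope_eq_ciInf_fbModel hgconv hμ0]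
  rw [hFμ_eq]
  exact ⟨iInf_coe_eq_iInf_coe_ciInf hc.le hmaj hdiag hbdd,
    isMinOn_univ_iff_ciInf hc hmaj hdiag hbdd hFcont.lowerSemicontinuous⟩

/-- the forward–backward envelope has the same infimum and
the same minimizers as the original composite objective `F = f + g`. -/
theorem FB_envelope_min_equivalence {n : ℕ}
    (f g F : EuclideanSpace ℝ (Fin n) → ℝ)
    (L μ : ℝ) (hL : 0 < L)
    (hfC1 : ContDiff ℝ 1 f)
    (hfconv : ConvexOn ℝ univ f)
    (hfLip : ∀ x y, ‖gradient f x - gradient f y‖ ≤ L * ‖x - y‖)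
    (hgconv : ConvexOn ℝ univ g) (hglsc : LowerSemicontinuous g)
    (hF : ∀ x, F x = f x + g x)
    (hμ : μ ∈ Ioo 0 (1 / L))
    (M : EuclideanSpace ℝ (Fin n) → ℝ)
    (hM : ∀ v, M v = ⨅ z : EuclideanSpace ℝ (Fin n), (g z + ‖z - v‖ ^ 2 / (2 * μ)))
    (Fμ : EuclideanSpace ℝ (Fin n) → ℝ)
    (hFμ : ∀ x, Fμ x = f x + M (x - μ • gradient f x) - μ / 2 * ‖gradient f x‖ ^ 2) :
    (⨅ x : EuclideanSpace ℝ (Fin n), (F x : EReal)) =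
      (⨅ x : EuclideanSpace ℝ (Fin n), (Fμ x : EReal)) ∧
    ∀ xs : EuclideanSpace ℝ (Fin n), IsMinOn F univ xs ↔ IsMinOn Fμ univ xs :=
  FB_envelope_min_equivalence_general f g F L μ hfC1 hfLip hgconv hF hμ M hM Fμ hFμ
end
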